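/- arXiv:1309.2363 — 9 statements merged into one kernel-verified Lean document; each statement's English description precedes it below -/
import Mathlib

section
/- Let Γ be a totally ordered abelian group with positive cone Γ⁺ = {x : x ≥ 0}, and let V : Γ⁺ → B(H) be a semigroup homomorphism into partial isometries (V_{s+t} = V_s V_t, each V_s a partial isometry). Then for every s, t ∈ Γ⁺ the projections V_s V_s† and V_t V_t† commute. -/
open ContinuousLinearMap

/-! Given `s ≤ t`, write `V t = V s * V (t - s)`. For a partial isometry `p`, the final
projection `p p*` acts as the identity on the left of `p q` and, via `p* p p* = p*`, on the
right of `(p q)*`; so both products of `p p*` with `(p q)(p q)*` equal `(p q)(p q)*`. -/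

section PartialIsometry

variable {R : Type*} [Monoid R] [StarMul R] {p : R}

theorem star_mul_mul_star_eq_star_of_mul_star_mul_eq (hp : p * star p * p = p) :
    star p * p * star p = star p := by
  simpa only [star_mul, star_star, mul_assoc] using congrArg star hp

theorem commute_mul_star_self_mul_mul_star_of_mul_star_mul_eq (hp : p * star p * p = p)
    (q : R) : Commute (p * star p) (p * q * star (p * q)) := by
  have hp' := star_mul_mul_star_eq_star_of_mul_star_mul_eq hp
  calc p * star p * (p * q * star (p * q))
      = p * star p * p * q * star (p * q) := by simp only [mul_assoc]
    _ = p * q * star (p * q) := by rw [hp]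
    _ = p * q * star q * (star p * p * star p) := by rw [hp', star_mul]; simp only [mul_assoc]
    _ = p * q * star (p * q) * (p * star p) := by rw [star_mul]; simp only [mul_assoc]

end PartialIsometry

theorem final_projections_commute_general
    {Γ : Type*} [AddCommGroup Γ] [LinearOrder Γ] [IsOrderedAddMonoid Γ]
    {H : Type*} [NormedAddCommGroup H] [InnerProductSpace ℂ H] [CompleteSpace H]
    (V : Γ → (H →L[ℂ] H))
    (hVadd : ∀ s t : Γ, 0 ≤ s → 0 ≤ t → V (s + t) = V s * V t)
    (hVpiso : ∀ s : Γ, 0 ≤ s → V s * adjoint (V s) * V s = V s)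
    (s t : Γ) (hs : 0 ≤ s) (ht : 0 ≤ t) :
    (V s * adjoint (V s)) * (V t * adjoint (V t)) =
      (V t * adjoint (V t)) * (V s * adjoint (V s)) := by
  wlog hst : s ≤ t generalizing s t
  · exact (this t s ht hs (le_of_not_ge hst)).symm
  have hVt : V t = V s * V (t - s) := by
    rw [← hVadd s (t - s) hs (sub_nonneg.2 hst), add_sub_cancel]
  have hpiso := hVpiso s hs
  simp only [← star_eq_adjoint] at hpiso ⊢
  rw [hVt]
  exact commute_mul_star_self_mul_mul_star_of_mul_star_mul_eq hpiso _

/-- If `V` is a partial-isometric representation of the positive cone `Γ⁺` of a totally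
ordered abelian group `Γ` on a Hilbert space, then the final projections `V_s V_s†` and
`V_t V_t†` commute for all `s, t ∈ Γ⁺`. -/
theorem final_projections_commute
    {Γ : Type*} [AddCommGroup Γ] [LinearOrder Γ] [IsOrderedAddMonoid Γ]
    {H : Type*} [NormedAddCommGroup H] [InnerProductSpace ℂ H] [CompleteSpace H]
    (V : Γ → (H →L[ℂ] H))
    (hV0 : V 0 = 1)
    (hVadd : ∀ s t : Γ, 0 ≤ s → 0 ≤ t → V (s + t) = V s * V t)
    (hVpiso : ∀ s : Γ, 0 ≤ s → V s * adjoint (V s) * V s = V s)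
    (s t : Γ) (hs : 0 ≤ s) (ht : 0 ≤ t) :
    (V s * adjoint (V s)) * (V t * adjoint (V t)) =
      (V t * adjoint (V t)) * (V s * adjoint (V s)) :=
  final_projections_commute_general V hVadd hVpiso s t hs ht
end

section
/- Under the same hypotheses, for every s, t ∈ Γ⁺ the projections V_s† V_s and V_t† V_t commute. -/
open ContinuousLinearMap

/-! If `s ≤ t` then `V t = V (t - s) * V s`, so `(V t)† V t = (V s)† X V s` for some `X`.
A partial isometry `a` satisfies `a a† a = a` and `a† a a† = a†`, so the initial projection
`a† a` is absorbed by `a† X a` from either side; hence both products equal `(V t)† V t`. -/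

section PartialIsometry

variable {R : Type*} [Monoid R] [StarMul R] {a : R}

theorem star_mul_self_mul_star_of_mul_star_mul_self (ha : a * star a * a = a) :
    star a * a * star a = star a := by
  simpa only [star_mul, star_star, mul_assoc] using congrArg star ha

theorem commute_star_mul_self_star_mul_mul_self (ha : a * star a * a = a) (c : R) :
    Commute (star a * a) (star (c * a) * (c * a)) := by
  have hleft : star a * a * (star a * (star c * c) * a) = star a * (star c * c) * a := by
    rw [← mul_assoc (star a * a), ← mul_assoc (star a * a),
      star_mul_self_mul_star_of_mul_star_mul_self ha]
  have hright : star a * (star c * c) * a * (star a * a) = star a * (star c * c) * a := by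
    rw [mul_assoc _ a, ← mul_assoc a, ha]
  have hfactor : star (c * a) * (c * a) = star a * (star c * c) * a := by
    simp only [star_mul, mul_assoc]
  rw [Commute, SemiconjBy, hfactor, hleft, hright]

end PartialIsometry

theorem initial_projections_commute_general
    {Γ : Type*} [AddCommGroup Γ] [LinearOrder Γ] [IsOrderedAddMonoid Γ]
    {H : Type*} [NormedAddCommGroup H] [InnerProductSpace ℂ H] [CompleteSpace H]
    (V : Γ → (H →L[ℂ] H))
    (hVadd : ∀ s t : Γ, 0 ≤ s → 0 ≤ t → V (s + t) = V s * V t)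
    (hVpiso : ∀ s : Γ, 0 ≤ s → V s * adjoint (V s) * V s = V s)
    (s t : Γ) (hs : 0 ≤ s) (ht : 0 ≤ t) :
    (adjoint (V s) * V s) * (adjoint (V t) * V t) =
      (adjoint (V t) * V t) * (adjoint (V s) * V s) := by
  simp only [← star_eq_adjoint] at hVpiso ⊢
  suffices key : ∀ a b : Γ, 0 ≤ a → a ≤ b → Commute (star (V a) * V a) (star (V b) * V b) by
    rcases le_total s t with hst | hts
    · exact key s t hs hst
    · exact (key t s ht hts).symm
  intro a b ha hab
  have hfactor : V b = V (b - a) * V a := by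
    rw [← hVadd _ _ (sub_nonneg.mpr hab) ha, sub_add_cancel]
  rw [hfactor]
  exact commute_star_mul_self_star_mul_mul_self (hVpiso a ha) _

/-- If `V` is a partial-isometric representation of the positive cone `Γ⁺` of a totally
ordered abelian group `Γ` on a Hilbert space, then the initial projections `V_s† V_s` and
`V_t† V_t` commute for all `s, t ∈ Γ⁺`. -/
theorem initial_projections_commute
    {Γ : Type*} [AddCommGroup Γ] [LinearOrder Γ] [IsOrderedAddMonoid Γ]
    {H : Type*} [NormedAddCommGroup H] [InnerProductSpace ℂ H] [CompleteSpace H]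
    (V : Γ → (H →L[ℂ] H))
    (hV0 : V 0 = 1)
    (hVadd : ∀ s t : Γ, 0 ≤ s → 0 ≤ t → V (s + t) = V s * V t)
    (hVpiso : ∀ s : Γ, 0 ≤ s → V s * adjoint (V s) * V s = V s)
    (s t : Γ) (hs : 0 ≤ s) (ht : 0 ≤ t) :
    (adjoint (V s) * V s) * (adjoint (V t) * V t) =
      (adjoint (V t) * V t) * (adjoint (V s) * V s) :=
  initial_projections_commute_general V hVadd hVpiso s t hs ht
end

section
/- Let v : Γ⁺ → A be a semigroup of partial isometries in a unital C*-algebra such that the initial projections v_x† v_x pairwise commute with final projections. Then for x, y ∈ Γ⁺: (v_x† v_x)(v_y† v_y) = v_m† v_m where m = max(x, y). -/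
/-!
If `x ≤ y` then `v y = v (y - x) * v x`, so the initial projection of `v y` has the form
`star (v x) * w * v x`; the identity `star (v x) * v x * star (v x) = star (v x)` for the
partial isometry `v x` lets `star (v x) * v x` be absorbed into it from the left, and taking
adjoints gives the absorption from the right.
-/

section PartialIsometry

variable {R : Type*} [Semigroup R] [StarMul R] {a : R}

theorem star_mul_self_mul_star_mul_self_of_mul_star_mul_self_eq (ha : a * star a * a = a)
    (b : R) : star a * a * (star (b * a) * (b * a)) = star (b * a) * (b * a) := by
  have ha' : star a * a * star a = star a := by
    simpa only [star_mul, star_star, mul_assoc] using congrArg star ha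
  calc star a * a * (star (b * a) * (b * a))
      = star a * a * star a * (star b * (b * a)) := by simp only [star_mul, mul_assoc]
    _ = star (b * a) * (b * a) := by rw [ha']; simp only [star_mul, mul_assoc]

theorem star_mul_self_mul_star_mul_self_of_mul_star_mul_self_eq' (ha : a * star a * a = a)
    (b : R) : star (b * a) * (b * a) * (star a * a) = star (b * a) * (b * a) := by
  simpa only [star_mul, star_star, mul_assoc] using
    congrArg star (star_mul_self_mul_star_mul_self_of_mul_star_mul_self_eq ha b)

end PartialIsometry

theorem eq_map_sub_mul_of_le {Γ : Type*} [AddCommGroup Γ] [LinearOrder Γ]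
    [IsOrderedAddMonoid Γ] {A : Type*} [Mul A] {v : Γ → A}
    (hadd : ∀ x y : Γ, 0 ≤ x → 0 ≤ y → v (x + y) = v x * v y)
    {x y : Γ} (hx : 0 ≤ x) (hxy : x ≤ y) : v y = v (y - x) * v x := by
  rw [← hadd _ _ (sub_nonneg.mpr hxy) hx, sub_add_cancel]

theorem initial_projections_mul_eq_max_general
    {Γ : Type*} [AddCommGroup Γ] [LinearOrder Γ] [IsOrderedAddMonoid Γ]
    {A : Type*} [CStarAlgebra A]
    (v : Γ → A)
    (hadd : ∀ x y : Γ, 0 ≤ x → 0 ≤ y → v (x + y) = v x * v y)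
    (hpiso : ∀ x : Γ, 0 ≤ x → v x * star (v x) * v x = v x)
    (x y : Γ) (hx : 0 ≤ x) (hy : 0 ≤ y) :
    (star (v x) * v x) * (star (v y) * v y) = star (v (max x y)) * v (max x y) := by
  rcases le_total x y with hxy | hyx
  · rw [max_eq_right hxy, eq_map_sub_mul_of_le hadd hx hxy]
    exact star_mul_self_mul_star_mul_self_of_mul_star_mul_self_eq (hpiso x hx) _
  · rw [max_eq_left hyx, eq_map_sub_mul_of_le hadd hy hyx]
    exact star_mul_self_mul_star_mul_self_of_mul_star_mul_self_eq' (hpiso y hy) _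

/-- For a semigroup of partial isometries `v : Γ⁺ → A` in a unital C*-algebra whose
initial projections commute with final projections, the initial projections satisfy
`(v_x† v_x)(v_y† v_y) = v_m† v_m` where `m = max (x, y)`. -/
theorem initial_projections_mul_eq_max
    {Γ : Type*} [AddCommGroup Γ] [LinearOrder Γ] [IsOrderedAddMonoid Γ]
    {A : Type*} [CStarAlgebra A]
    (v : Γ → A)
    (hv0 : v 0 = 1)
    (hadd : ∀ x y : Γ, 0 ≤ x → 0 ≤ y → v (x + y) = v x * v y)
    (hpiso : ∀ x : Γ, 0 ≤ x → v x * star (v x) * v x = v x)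
    (hcomm : ∀ x y : Γ, 0 ≤ x → 0 ≤ y →
      (star (v x) * v x) * (v y * star (v y)) = (v y * star (v y)) * (star (v x) * v x))
    (x y : Γ) (hx : 0 ≤ x) (hy : 0 ≤ y) :
    (star (v x) * v x) * (star (v y) * v y) = star (v (max x y)) * v (max x y) :=
  initial_projections_mul_eq_max_general v hadd hpiso x y hx hy
end

section
/- With P_t = 1 − v_t† v_t for a partial-isometric semigroup representation v of Γ⁺ in a unital C*-algebra, the family {P_t} is increasing: s ≥ t implies P_s ≥ P_t (as self-adjoint elements, P_s − P_t is positive). In fact P_s − P_t = (P_{s−t} v_t)† (P_{s−t} v_t). -/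
/-! Write `u = s - t`, so `v s = v u * v t`. Then `P s - P t = star (v t) * P u * v t`, and since
`v u` is a partial isometry, `P u` is a projection, so this conjugate equals
`star (P u * v t) * (P u * v t)`, which is positive. -/

theorem isStarProjection_star_mul_self_of_mul_star_mul_self {R : Type*} [Semigroup R] [StarMul R]
    {a : R} (h : a * star a * a = a) : IsStarProjection (star a * a) where
  isIdempotentElem := by
    rw [IsIdempotentElem, mul_assoc, ← mul_assoc a, h]
  isSelfAdjoint := .star_mul_self a

theorem IsStarProjection.star_mul_mul_self {R : Type*} [Semigroup R] [StarMul R] {p : R}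
    (hp : IsStarProjection p) (x : R) : star x * p * x = star (p * x) * (p * x) := by
  rw [star_mul, hp.isSelfAdjoint.star_eq, ← mul_assoc (star x * p), mul_assoc (star x) p p,
    hp.isIdempotentElem.eq]

theorem one_sub_star_mul_self_mul_sub {R : Type*} [Ring R] [StarRing R] (a b : R) :
    (1 - star (a * b) * (a * b)) - (1 - star b * b) = star b * (1 - star a * a) * b := by
  rw [star_mul]
  noncomm_ring

theorem P_increasing_general
    {Γ : Type*} [AddCommGroup Γ] [LinearOrder Γ] [IsOrderedAddMonoid Γ]
    {A : Type*} [CStarAlgebra A] [PartialOrder A] [StarOrderedRing A]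
    (v : Γ → A)
    (hadd : ∀ x y : Γ, 0 ≤ x → 0 ≤ y → v (x + y) = v x * v y)
    (hpiso : ∀ x : Γ, 0 ≤ x → v x * star (v x) * v x = v x)
    (P : Γ → A) (hP : ∀ t : Γ, P t = 1 - star (v t) * v t)
    (s t : Γ) (ht : 0 ≤ t) (hts : t ≤ s) :
    P s - P t = star (P (s - t) * v t) * (P (s - t) * v t) ∧ P t ≤ P s := by
  have hst : 0 ≤ s - t := sub_nonneg.mpr hts
  have hvs : v s = v (s - t) * v t := by rw [← hadd _ _ hst ht, sub_add_cancel]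
  have hproj : IsStarProjection (P (s - t)) :=
    hP (s - t) ▸ (isStarProjection_star_mul_self_of_mul_star_mul_self (hpiso _ hst)).one_sub
  have hdiff : P s - P t = star (P (s - t) * v t) * (P (s - t) * v t) := by
    rw [← hproj.star_mul_mul_self, hP s, hP t, hP (s - t), hvs, one_sub_star_mul_self_mul_sub]
  exact ⟨hdiff, sub_nonneg.mp (hdiff ▸ star_mul_self_nonneg _)⟩

/-- For `P_t = 1 − v_t† v_t`, with `v` a partial-isometric semigroup representation of
`Γ⁺` in a unital C*-algebra, the family `{P_t}` is increasing: if `t ≤ s` then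
`P_s − P_t = (P_{s−t} v_t)† (P_{s−t} v_t)`, and in particular `P_t ≤ P_s`. -/
theorem P_increasing
    {Γ : Type*} [AddCommGroup Γ] [LinearOrder Γ] [IsOrderedAddMonoid Γ]
    {A : Type*} [CStarAlgebra A] [PartialOrder A] [StarOrderedRing A]
    (v : Γ → A)
    (hv0 : v 0 = 1)
    (hadd : ∀ x y : Γ, 0 ≤ x → 0 ≤ y → v (x + y) = v x * v y)
    (hpiso : ∀ x : Γ, 0 ≤ x → v x * star (v x) * v x = v x)
    (P : Γ → A) (hP : ∀ t : Γ, P t = 1 - star (v t) * v t)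
    (s t : Γ) (ht : 0 ≤ t) (hts : t ≤ s) :
    P s - P t = star (P (s - t) * v t) * (P (s - t) * v t) ∧ P t ≤ P s :=
  P_increasing_general v hadd hpiso P hP s t ht hts
end

section
/- With P_t = 1 − v_t† v_t as above, for x ≤ y in Γ⁺ we have P_x · v_y† = 0, and for x > y we have P_x · v_y† = v_y† · P_{x−y}, provided additionally that v_y v_y† commutes with v_{x−y}† v_{x−y} for all relevant x, y. -/
section PartialIsometry

variable {R : Type*}

theorem star_mul_self_mul_star_of_mul_star_mul_self_s11 [Semigroup R] [StarMul R] {a : R}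
    (h : a * star a * a = a) : star a * a * star a = star a := by
  simpa only [star_mul, star_star, mul_assoc] using congrArg star h

variable [Ring R] [StarMul R]

theorem one_sub_star_mul_self_mul_star_mul_eq_zero {b : R} (hb : star b * b * star b = star b)
    (c : R) : (1 - star b * b) * star (c * b) = 0 := by
  rw [sub_mul, one_mul, star_mul, ← mul_assoc, hb, sub_self]

theorem one_sub_star_mul_self_mul_star_comm {a b : R} (hb : star b * b * star b = star b)
    (hab : Commute (b * star b) (star a * a)) :
    (1 - star (a * b) * (a * b)) * star b = star b * (1 - star a * a) := by
  have key : star (a * b) * (a * b) * star b = star b * (star a * a) :=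
    calc star (a * b) * (a * b) * star b = star b * ((star a * a) * (b * star b)) := by
          simp only [star_mul, mul_assoc]
      _ = (star b * b * star b) * (star a * a) := by rw [← hab.eq]; simp only [mul_assoc]
      _ = star b * (star a * a) := by rw [hb]
  rw [sub_mul, one_mul, mul_sub, mul_one, key]

end PartialIsometry

theorem P_mul_star_v_general
    {Γ : Type*} [AddCommGroup Γ] [LinearOrder Γ] [IsOrderedAddMonoid Γ]
    {A : Type*} [CStarAlgebra A]
    (v : Γ → A)
    (hadd : ∀ x y : Γ, 0 ≤ x → 0 ≤ y → v (x + y) = v x * v y)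
    (hpiso : ∀ x : Γ, 0 ≤ x → v x * star (v x) * v x = v x)
    (hcomm : ∀ x y : Γ, 0 ≤ x → 0 ≤ y →
      (v x * star (v x)) * (star (v y) * v y) = (star (v y) * v y) * (v x * star (v x)))
    (P : Γ → A) (hP : ∀ t : Γ, P t = 1 - star (v t) * v t)
    (x y : Γ) (hx : 0 ≤ x) (hy : 0 ≤ y) :
    (x ≤ y → P x * star (v y) = 0) ∧ (y < x → P x * star (v y) = star (v y) * P (x - y)) := by
  have hstar t (ht : 0 ≤ t) := star_mul_self_mul_star_of_mul_star_mul_self_s11 (hpiso t ht)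
  have hsplit {s t : Γ} (hst : s ≤ t) (hs : 0 ≤ s) : v t = v (t - s) * v s := by
    rw [← hadd _ _ (sub_nonneg.2 hst) hs, sub_add_cancel]
  constructor
  · intro hxy
    rw [hP, hsplit hxy hx]
    exact one_sub_star_mul_self_mul_star_mul_eq_zero (hstar x hx) _
  · intro hyx
    rw [hP, hP, hsplit hyx.le hy]
    exact one_sub_star_mul_self_mul_star_comm (hstar y hy) (hcomm y _ hy (sub_nonneg.2 hyx.le))

/-- For `P_t = 1 − v_t† v_t` and a partial-isometric semigroup representation `v` of `Γ⁺`
whose final projections commute with initial projections: if `x ≤ y` then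
`P_x v_y† = 0`, and if `x > y` then `P_x v_y† = v_y† P_{x−y}`. -/
theorem P_mul_star_v
    {Γ : Type*} [AddCommGroup Γ] [LinearOrder Γ] [IsOrderedAddMonoid Γ]
    {A : Type*} [CStarAlgebra A]
    (v : Γ → A)
    (hv0 : v 0 = 1)
    (hadd : ∀ x y : Γ, 0 ≤ x → 0 ≤ y → v (x + y) = v x * v y)
    (hpiso : ∀ x : Γ, 0 ≤ x → v x * star (v x) * v x = v x)
    (hcomm : ∀ x y : Γ, 0 ≤ x → 0 ≤ y →
      (v x * star (v x)) * (star (v y) * v y) = (star (v y) * v y) * (v x * star (v x)))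
    (P : Γ → A) (hP : ∀ t : Γ, P t = 1 - star (v t) * v t)
    (x y : Γ) (hx : 0 ≤ x) (hy : 0 ≤ y) :
    (x ≤ y → P x * star (v y) = 0) ∧ (y < x → P x * star (v y) = star (v y) * P (x - y)) :=
  P_mul_star_v_general v hadd hpiso hcomm P hP x y hx hy
end

section
/- Suppose Γ is an Archimedean totally ordered abelian group (a subgroup of ℝ), v : Γ⁺ → A a semigroup of partial isometries with v 0 = 1 in a unital C*-algebra satisfying the commutation relations of a partial-isometric representation. If v_s is an isometry (v_s† v_s = 1) for some s > 0, then v_x is an isometry for every x ∈ Γ⁺. -/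
/-!
Choose `n` with `x < n • s` and put `y = n • s - x ≥ 0`. Then `v (n • s) = v x * v y = v y * v x`
is an isometry. With `p = v x† v x` and `e = v y v y†`, the first factorisation gives
`v y† p v y = 1`, hence `e p e = e`; as `p` commutes with the projection `e` this yields `p e = e`,
and then `v y† v y = v y† (p e) v y = 1`. The second factorisation finally gives
`v x† v x = v x† (v y† v y) v x = 1`.
-/

section StarMonoid

variable {R : Type*} [Monoid R] [StarMul R]

lemma star_mul_self_mul_eq_one {a b : R} (ha : star a * a = 1) (hb : star b * b = 1) :
    star (a * b) * (a * b) = 1 := by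
  rw [star_mul, mul_assoc, ← mul_assoc (star a), ha, one_mul, hb]

lemma star_mul_self_eq_one_of_star_mul_self_mul_eq_one {a b : R}
    (hb : b * star b * b = b)
    (hcomm : b * star b * (star a * a) = star a * a * (b * star b))
    (hab : star (a * b) * (a * b) = 1) :
    star b * b = 1 := by
  set p := star a * a
  set e := b * star b
  have hkey : star b * p * b = 1 := by
    simpa only [p, star_mul, mul_assoc] using hab
  have he : e * e = e := by rw [← mul_assoc, hb]
  have hepe : e * p * e = e := by
    calc e * p * e = b * (star b * p * b) * star b := by simp only [e, mul_assoc]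
      _ = e := by rw [hkey, mul_one]
  have hpe : p * e = e := by
    calc p * e = p * e * e := by rw [mul_assoc p e e, he]
      _ = e * p * e := by rw [hcomm]
      _ = e := hepe
  calc star b * b = star b * (p * e * b) := by rw [hpe, hb]
    _ = star b * p * (e * b) := by simp only [mul_assoc]
    _ = 1 := by rw [hb, hkey]

end StarMonoid

section Semigroup

variable {Γ : Type*} [AddCommGroup Γ] [LinearOrder Γ] [IsOrderedAddMonoid Γ]
  {A : Type*} [Monoid A] [StarMul A] {v : Γ → A}

lemma star_mul_self_nsmul_eq_one (hv0 : v 0 = 1)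
    (hadd : ∀ x y : Γ, 0 ≤ x → 0 ≤ y → v (x + y) = v x * v y)
    {s : Γ} (hs : 0 ≤ s) (hiso : star (v s) * v s = 1) (n : ℕ) :
    star (v (n • s)) * v (n • s) = 1 := by
  induction n with
  | zero => simp [hv0]
  | succ k ih =>
    rw [succ_nsmul, hadd _ _ (nsmul_nonneg hs k) hs]
    exact star_mul_self_mul_eq_one ih hiso

lemma star_mul_self_eq_one_of_le
    (hadd : ∀ x y : Γ, 0 ≤ x → 0 ≤ y → v (x + y) = v x * v y)
    (hpiso : ∀ x : Γ, 0 ≤ x → v x * star (v x) * v x = v x)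
    (hcomm : ∀ x y : Γ, 0 ≤ x → 0 ≤ y →
      (v x * star (v x)) * (star (v y) * v y) = (star (v y) * v y) * (v x * star (v x)))
    {x z : Γ} (hx : 0 ≤ x) (hxz : x ≤ z) (hz : star (v z) * v z = 1) :
    star (v x) * v x = 1 := by
  set y := z - x
  have hy : 0 ≤ y := sub_nonneg.mpr hxz
  have hxy : v z = v x * v y := by rw [← hadd x y hx hy, add_sub_cancel]
  have hyx : v z = v y * v x := by rw [← hadd y x hy hx, sub_add_cancel]
  have hy_iso : star (v y) * v y = 1 :=
    star_mul_self_eq_one_of_star_mul_self_mul_eq_one (hpiso y hy) (hcomm y x hy hx) (hxy ▸ hz)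
  calc star (v x) * v x = star (v x) * (star (v y) * v y) * v x := by rw [hy_iso, mul_one]
    _ = star (v z) * v z := by rw [hyx, star_mul]; simp only [mul_assoc]
    _ = 1 := hz

end Semigroup

/-- If `Γ` is an Archimedean totally ordered abelian group and `v : Γ⁺ → A` is a
partial-isometric semigroup representation (with commuting final/initial projections)
in a unital C*-algebra such that `v_s` is an isometry for some `s > 0`, then `v_x` is an
isometry for every `x ∈ Γ⁺`. -/
theorem all_isometries_of_isometry
    {Γ : Type*} [AddCommGroup Γ] [LinearOrder Γ] [IsOrderedAddMonoid Γ]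
    (harch : ∀ x s : Γ, 0 < s → ∃ n : ℕ, x < n • s)
    {A : Type*} [CStarAlgebra A]
    (v : Γ → A)
    (hv0 : v 0 = 1)
    (hadd : ∀ x y : Γ, 0 ≤ x → 0 ≤ y → v (x + y) = v x * v y)
    (hpiso : ∀ x : Γ, 0 ≤ x → v x * star (v x) * v x = v x)
    (hcomm : ∀ x y : Γ, 0 ≤ x → 0 ≤ y →
      (v x * star (v x)) * (star (v y) * v y) = (star (v y) * v y) * (v x * star (v x)))
    (s : Γ) (hs : 0 < s) (hiso : star (v s) * v s = 1)
    (x : Γ) (hx : 0 ≤ x) :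
    star (v x) * v x = 1 := by
  obtain ⟨n, hn⟩ := harch x s hs
  exact star_mul_self_eq_one_of_le hadd hpiso hcomm hx hn.le
    (star_mul_self_nsmul_eq_one hv0 hadd hs.le hiso n)
end

section
/- Let s > 0 and suppose v_s† v_s = 1 for a partial-isometric semigroup representation v (with commuting initial/final projections). Then for every x < s, v_{s−x}† · v_s = v_x, and consequently v_x† v_x = 1. -/
/-!
Write `y = s - x`, so `v s = v y * v x` and `p = v_y† v_y` is a projection with `v_x† p v_x = 1`.
Since `p ≤ 1`, the projection `v_x† v_x` dominates `1`, hence equals `1`. Then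
`((1 - p) v_x)† ((1 - p) v_x) = v_x† v_x - v_x† p v_x = 0`, so `p v_x = v_x`, which is
`v_y† v_s = v_x`.
-/

lemma isStarProjection_star_mul_self_of_mul_star_mul_self_s14 {R : Type*} [Semiring R] [StarRing R]
    {u : R} (hu : u * star u * u = u) : IsStarProjection (star u * u) where
  isIdempotentElem := by
    rw [IsIdempotentElem, mul_assoc, ← mul_assoc u, hu]
  isSelfAdjoint := .star_mul_self u

section Conjugate

variable {A : Type*} {p u : A}

lemma star_mul_self_eq_one_of_star_mul_mul_eq_one [Ring A] [StarRing A] [PartialOrder A]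
    [StarOrderedRing A] (hp : IsStarProjection p) (hu : IsStarProjection (star u * u))
    (h : star u * p * u = 1) : star u * u = 1 :=
  le_antisymm hu.le_one <| by
    simpa [h] using star_left_conjugate_le_conjugate hp.le_one u

lemma mul_eq_self_of_star_mul_mul_eq_star_mul_self [NormedRing A] [StarRing A] [CStarRing A]
    (hp : IsStarProjection p) (h : star u * p * u = star u * u) : p * u = u := by
  have hq := hp.one_sub
  have hzero : star ((1 - p) * u) * ((1 - p) * u) = 0 := by
    rw [star_mul, hq.isSelfAdjoint.star_eq, mul_assoc, ← mul_assoc (1 - p), hq.isIdempotentElem.eq]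
    simp [mul_sub, sub_mul, ← mul_assoc, h]
  rw [CStarRing.star_mul_self_eq_zero_iff, sub_mul, one_mul, sub_eq_zero] at hzero
  exact hzero.symm

end Conjugate

theorem isometry_below_isometry_general
    {Γ : Type*} [AddCommGroup Γ] [LinearOrder Γ] [IsOrderedAddMonoid Γ]
    {A : Type*} [CStarAlgebra A]
    (v : Γ → A)
    (hadd : ∀ x y : Γ, 0 ≤ x → 0 ≤ y → v (x + y) = v x * v y)
    (hpiso : ∀ x : Γ, 0 ≤ x → v x * star (v x) * v x = v x)
    (s : Γ) (hiso : star (v s) * v s = 1)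
    (x : Γ) (hx : 0 ≤ x) (hxs : x < s) :
    star (v (s - x)) * v s = v x ∧ star (v x) * v x = 1 := by
  let _ := CStarAlgebra.spectralOrder A
  have := CStarAlgebra.spectralOrderedRing A
  have hy : 0 ≤ s - x := sub_nonneg.mpr hxs.le
  have hvs : v s = v (s - x) * v x := by rw [← hadd _ _ hy hx, sub_add_cancel]
  have hp := isStarProjection_star_mul_self_of_mul_star_mul_self_s14 (hpiso _ hy)
  have hconj : star (v x) * (star (v (s - x)) * v (s - x)) * v x = 1 := by
    rw [← hiso, hvs, star_mul]
    simp only [mul_assoc]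
  have hisox := star_mul_self_eq_one_of_star_mul_mul_eq_one hp
    (isStarProjection_star_mul_self_of_mul_star_mul_self_s14 (hpiso x hx)) hconj
  refine ⟨?_, hisox⟩
  rw [hvs, ← mul_assoc]
  exact mul_eq_self_of_star_mul_mul_eq_star_mul_self hp (hconj.trans hisox.symm)

/-- Suppose `v_s† v_s = 1` for a partial-isometric semigroup representation `v` of `Γ⁺`
(with commuting final/initial projections) and `s > 0`. Then for every `0 ≤ x < s`,
`v_{s−x}† v_s = v_x`, and consequently `v_x` is an isometry. -/
theorem isometry_below_isometry
    {Γ : Type*} [AddCommGroup Γ] [LinearOrder Γ] [IsOrderedAddMonoid Γ]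
    {A : Type*} [CStarAlgebra A]
    (v : Γ → A)
    (hv0 : v 0 = 1)
    (hadd : ∀ x y : Γ, 0 ≤ x → 0 ≤ y → v (x + y) = v x * v y)
    (hpiso : ∀ x : Γ, 0 ≤ x → v x * star (v x) * v x = v x)
    (hcomm : ∀ x y : Γ, 0 ≤ x → 0 ≤ y →
      (v x * star (v x)) * (star (v y) * v y) = (star (v y) * v y) * (v x * star (v x)))
    (s : Γ) (hs : 0 < s) (hiso : star (v s) * v s = 1)
    (x : Γ) (hx : 0 ≤ x) (hxs : x < s) :
    star (v (s - x)) * v s = v x ∧ star (v x) * v x = 1 :=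
  isometry_below_isometry_general v hadd hpiso s hiso x hx hxs
end

section
/- Let (A, ℕ, α) be a system with α an endomorphism of the C*-algebra A, and define π_α : A → L(ℓ²(ℕ, A)) by (π_α(a) f)(n) = αⁿ(a) · f(n). Then π_α is an injective *-homomorphism and satisfies π_α(a) ∘ S = S ∘ π_α(α(a)) where S is the unilateral shift. -/
/-- The unilateral shift on `ℓ²(ℕ, A)`. -/
def shiftOp {A : Type*} [Zero A] (f : ℕ → A) : ℕ → A
  | 0 => 0
  | n + 1 => f n

/-- The diagonal representation `π_α : A → L(ℓ²(ℕ, A))`, `(π_α(a) f)(n) = αⁿ(a) f(n)`. -/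
def piMap {A : Type*} [Mul A] (α : A → A) (a : A) (f : ℕ → A) : ℕ → A :=
  fun n => α^[n] a * f n

/-!
Every iterate `αⁿ = ⇑(α ^ n)` is again a *-homomorphism, hence contractive, so `π_α(a)` is a
diagonal operator with entries bounded by `‖a‖`. Such an operator preserves square-summability,
because `star (c f) (c f) = star f (star c c) f ≤ ‖c‖² star f f` in the spectral order; the
algebraic properties of `π_α` hold entrywise.
Injectivity is read off at `n = 0`: left multiplication by `a` determines `a` in a C⋆-algebra.
-/

theorem NonUnitalStarAlgHom.coe_pow {R A : Type*} [Monoid R] [NonUnitalNonAssocSemiring A]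
    [DistribMulAction R A] [Star A] (f : A →⋆ₙₐ[R] A) (n : ℕ) : ⇑(f ^ n) = (⇑f)^[n] :=
  hom_coe_pow _ rfl (fun _ _ => rfl) f n

theorem CStarRing.eq_of_forall_mul_eq {A : Type*} [NonUnitalNormedRing A] [StarRing A]
    [CStarRing A] {a b : A} (h : ∀ x, a * x = b * x) : a = b := by
  rw [← sub_eq_zero, ← CStarRing.mul_star_self_eq_zero_iff, sub_mul, h, sub_self]

section SquareSummable

variable {ι A : Type*} [NonUnitalCStarAlgebra A]

theorem norm_sum_star_mul_self_mul_le (s : Finset ι) {c f : ι → A} {r : ℝ}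
    (hc : ∀ i, ‖c i‖ ≤ r) :
    ‖∑ i ∈ s, star (c i * f i) * (c i * f i)‖ ≤ r ^ 2 * ‖∑ i ∈ s, star (f i) * f i‖ := by
  let _ := CStarAlgebra.spectralOrder A
  have _ := CStarAlgebra.spectralOrderedRing A
  have hterm (i : ι) : star (c i * f i) * (c i * f i) ≤ r ^ 2 • (star (f i) * f i) :=
    calc star (c i * f i) * (c i * f i) = star (f i) * (star (c i) * c i) * f i := by
          simp only [star_mul, mul_assoc]
      _ ≤ ‖star (c i) * c i‖ • (star (f i) * f i) :=
          CStarAlgebra.star_left_conjugate_le_norm_smul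
      _ ≤ r ^ 2 • (star (f i) * f i) := by
          rw [CStarRing.norm_star_mul_self, ← sq]
          exact smul_le_smul_of_nonneg_right (pow_le_pow_left₀ (norm_nonneg _) (hc i) 2)
            (star_mul_self_nonneg _)
  calc ‖∑ i ∈ s, star (c i * f i) * (c i * f i)‖
      ≤ ‖r ^ 2 • ∑ i ∈ s, star (f i) * f i‖ := by
        refine CStarAlgebra.norm_le_norm_of_nonneg_of_le
          (Finset.sum_nonneg fun i _ => star_mul_self_nonneg _) ?_
        rw [Finset.smul_sum]
        exact Finset.sum_le_sum fun i _ => hterm i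
    _ = r ^ 2 * ‖∑ i ∈ s, star (f i) * f i‖ := by
        rw [norm_smul, Real.norm_of_nonneg (sq_nonneg r)]

theorem summable_star_mul_self_mul {c f : ι → A} {r : ℝ} (hc : ∀ i, ‖c i‖ ≤ r)
    (hf : Summable fun i => star (f i) * f i) :
    Summable fun i => star (c i * f i) * (c i * f i) := by
  rw [summable_iff_vanishing_norm] at hf ⊢
  intro ε hε
  obtain ⟨s, hs⟩ := hf (ε / (r ^ 2 + 1)) (by positivity)
  refine ⟨s, fun t ht => ?_⟩
  calc ‖∑ i ∈ t, star (c i * f i) * (c i * f i)‖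
      ≤ r ^ 2 * ‖∑ i ∈ t, star (f i) * f i‖ := norm_sum_star_mul_self_mul_le t hc
    _ ≤ (r ^ 2 + 1) * ‖∑ i ∈ t, star (f i) * f i‖ := by gcongr; linarith
    _ < (r ^ 2 + 1) * (ε / (r ^ 2 + 1)) := by gcongr; exact hs t ht
    _ = ε := by field_simp

end SquareSummable

theorem piMap_apply {R A : Type*} [Monoid R] [NonUnitalNonAssocSemiring A]
    [DistribMulAction R A] [Star A] (α : A →⋆ₙₐ[R] A) (a : A) (f : ℕ → A) (n : ℕ) : piMap (⇑α) a f n = (α ^ n) a * f n := by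
  rw [piMap, NonUnitalStarAlgHom.coe_pow]

/-- For a *-endomorphism `α` of a C*-algebra `A`, the map `π_α` given by
`(π_α(a) f)(n) = αⁿ(a) f(n)` is a well-defined injective *-homomorphism of `A` into the
adjointable operators on `ℓ²(ℕ, A)`, and it satisfies `π_α(a) ∘ S = S ∘ π_α(α(a))` for
the unilateral shift `S`. -/
theorem piMap_star_hom_injective_shift
    {A : Type*} [NonUnitalCStarAlgebra A] (α : A →⋆ₙₐ[ℂ] A) :
    -- well-defined: `π_α(a) f ∈ ℓ²(ℕ, A)`
    (∀ (a : A) (f : ℕ → A), Summable (fun n => star (f n) * f n) →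
        Summable (fun n => star (piMap (⇑α) a f n) * piMap (⇑α) a f n)) ∧
    -- additive
    (∀ a b : A, piMap (⇑α) (a + b) = fun f n => piMap (⇑α) a f n + piMap (⇑α) b f n) ∧
    -- multiplicative
    (∀ (a b : A) (f : ℕ → A), piMap (⇑α) (a * b) f = piMap (⇑α) a (piMap (⇑α) b f)) ∧
    -- adjointable, with adjoint `π_α(star a)`
    (∀ (a : A) (f g : ℕ → A), Summable (fun n => star (f n) * f n) →
        Summable (fun n => star (g n) * g n) →
        ∑' n, star (piMap (⇑α) a f n) * g n = ∑' n, star (f n) * piMap (⇑α) (star a) g n) ∧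
    -- injective
    (∀ a b : A, piMap (⇑α) a = piMap (⇑α) b → a = b) ∧
    -- `π_α(a) * S = S * π_α(α a)`
    (∀ (a : A) (f : ℕ → A), piMap (⇑α) a (shiftOp f) = shiftOp (piMap (⇑α) (α a) f)) := by
  refine ⟨fun a f hf => ?_, fun a b => ?_, fun a b f => ?_, fun a f g _ _ => ?_,
    fun a b h => ?_, fun a f => ?_⟩
  · simpa only [piMap_apply] using
      summable_star_mul_self_mul (fun n => NonUnitalStarAlgHom.norm_apply_le (α ^ n) a) hf
  · ext f n
    simp only [piMap_apply, map_add, add_mul]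
  · ext n
    simp only [piMap_apply, map_mul, mul_assoc]
  · simp only [piMap_apply, map_star, star_mul, mul_assoc]
  · refine CStarRing.eq_of_forall_mul_eq fun x => ?_
    simpa [piMap] using congrFun (congrFun h fun _ => x) 0
  · ext (_ | n)
    · simp [piMap, shiftOp]
    · simp [piMap, shiftOp, Function.iterate_succ_apply]
end

section
/- On the Hilbert A-module ℓ²(ℕ, A), the operator Sᵐ π_α(a b†) (1 − S S†) (Sⁿ)† equals the rank-one operator θ_{f,g} where f is the sequence with f(m) = a and 0 elsewhere, and g is the sequence with g(n) = b and 0 elsewhere. In particular it is a compact (finite-rank) adjointable operator. -/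
/-- The adjoint of the unilateral shift. -/
def shiftAdjOp {A : Type*} (f : ℕ → A) : ℕ → A := fun n => f (n + 1)

/-- The operator `1 − S S†`. -/
def oneSubShiftShiftAdj {A : Type*} [Zero A] [Sub A] (f : ℕ → A) : ℕ → A :=
  fun n => f n - shiftOp (shiftAdjOp f) n

/-- The sequence supported at `m` with value `a`. -/
def deltaSeq {A : Type*} [Zero A] (m : ℕ) (a : A) : ℕ → A :=
  fun k => if k = m then a else 0

/-- The "rank-one" operator `θ_{ξ,η} : ζ ↦ ξ ⬝ ⟨η, ζ⟩` on `ℓ²(ℕ, A)`. -/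
noncomputable def thetaOp {A : Type*} [NonUnitalCStarAlgebra A]
    (ξ η ζ : ℕ → A) : ℕ → A :=
  fun k => ξ k * ∑' j, star (η j) * ζ j

/-! `1 − S S†` keeps only the `0`-th coordinate, so `(1 − S S†)(S†)ⁿ ζ = δ₀ (ζ n)`; then `π_α(c)`
multiplies that coordinate by `α⁰ c = c` and `Sᵐ` moves it to index `m`. The composite is therefore
`ζ ↦ δₘ (a b* ζ n)`, and `⟨δₙ b, ζ⟩ = b* ζ n` identifies it with `θ_{δₘ a, δₙ b}`. -/

section Sequences

variable {A : Type*}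

theorem shiftAdjOp_iterate_apply (n : ℕ) (ζ : ℕ → A) (k : ℕ) :
    shiftAdjOp^[n] ζ k = ζ (k + n) := by
  induction n generalizing ζ with
  | zero => rfl
  | succ n ih =>
    rw [Function.iterate_succ_apply, ih]
    rfl

theorem shiftOp_deltaSeq [Zero A] (m : ℕ) (x : A) :
    shiftOp (deltaSeq m x) = deltaSeq (m + 1) x := by
  funext k
  cases k <;> simp [shiftOp, deltaSeq]

theorem shiftOp_iterate_deltaSeq [Zero A] (m k : ℕ) (x : A) :
    shiftOp^[m] (deltaSeq k x) = deltaSeq (k + m) x := by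
  induction m with
  | zero => rfl
  | succ m ih => rw [Function.iterate_succ_apply', ih, shiftOp_deltaSeq, Nat.add_assoc]

theorem oneSubShiftShiftAdj_eq_deltaSeq [AddGroup A] (f : ℕ → A) :
    oneSubShiftShiftAdj f = deltaSeq 0 (f 0) := by
  funext k
  cases k <;> simp [oneSubShiftShiftAdj, shiftOp, shiftAdjOp, deltaSeq]

theorem piMap_deltaSeq_zero [MulZeroClass A] (α : A → A) (c x : A) :
    piMap α c (deltaSeq 0 x) = deltaSeq 0 (c * x) := by
  funext k
  by_cases hk : k = 0 <;> simp [piMap, deltaSeq, hk]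

theorem deltaSeq_mul_apply [MulZeroClass A] (m : ℕ) (x y : A) (k : ℕ) :
    deltaSeq m x k * y = deltaSeq m (x * y) k := by
  by_cases hk : k = m <;> simp [deltaSeq, hk]

theorem thetaOp_deltaSeq [NonUnitalCStarAlgebra A] (m n : ℕ) (a b : A) (ζ : ℕ → A) :
    thetaOp (deltaSeq m a) (deltaSeq n b) ζ = deltaSeq m (a * (star b * ζ n)) := by
  have inner_eq : ∑' j, star (deltaSeq n b j) * ζ j = star b * ζ n := by
    rw [tsum_eq_single n fun j hj => by simp [deltaSeq, hj]]
    simp [deltaSeq]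
  funext k
  rw [thetaOp, inner_eq, deltaSeq_mul_apply]

theorem shift_piMap_oneSubShift_eq_deltaSeq [NonUnitalNonAssocRing A] (α : A → A) (m n : ℕ)
    (c : A) (ζ : ℕ → A) :
    shiftOp^[m] (piMap α c (oneSubShiftShiftAdj (shiftAdjOp^[n] ζ))) = deltaSeq m (c * ζ n) := by
  rw [oneSubShiftShiftAdj_eq_deltaSeq, piMap_deltaSeq_zero, shiftOp_iterate_deltaSeq,
    shiftAdjOp_iterate_apply, Nat.zero_add, Nat.zero_add]

end Sequences

/-- On `ℓ²(ℕ, A)`, the operator `Sᵐ π_α(a b†) (1 − S S†) (S†)ⁿ` equals the rank-one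
operator `θ_{f,g}` where `f = δ_m a` and `g = δ_n b`; in particular it is a finite-rank
(hence compact) operator, its output being supported at the single index `m`. -/
theorem shift_piMap_oneSubShift_eq_theta
    {A : Type*} [NonUnitalCStarAlgebra A] (α : A →⋆ₙₐ[ℂ] A)
    (m n : ℕ) (a b : A) :
    (∀ ζ : ℕ → A, Summable (fun j => star (ζ j) * ζ j) →
      shiftOp^[m] (piMap (⇑α) (a * star b) (oneSubShiftShiftAdj (shiftAdjOp^[n] ζ))) =
        thetaOp (deltaSeq m a) (deltaSeq n b) ζ) ∧
    (∀ ζ : ℕ → A, ∀ k : ℕ, k ≠ m →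
      shiftOp^[m] (piMap (⇑α) (a * star b) (oneSubShiftShiftAdj (shiftAdjOp^[n] ζ))) k = 0) := by
  simp only [shift_piMap_oneSubShift_eq_deltaSeq]
  refine ⟨fun ζ _ => by rw [thetaOp_deltaSeq, mul_assoc], fun ζ k hk => if_neg hk⟩
end
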